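/- Let B be a right intensity matrix whose final limit P := lim_{t→∞} exp(t·B) exists. Then P is a right stochastic matrix satisfying P·B = 0 and P·P = P. -/

import Mathlib

/-!
For `t ≥ 0` the matrix `exp (t • B)` is right stochastic: its rows sum to one because `B`
annihilates the all-ones vector, and its entries are nonnegative because `B + c • 1` is entrywise
nonnegative for large `c` while `exp (c • 1)` is a positive scalar. Right stochastic matrices form
a closed set, so the limit `P` is right stochastic. Letting `t → ∞` in
`exp (t • B) * exp (s • B) = exp ((t + s) • B)` gives `P * exp (s • B) = P` for every `s`;
differentiating at `s = 0` gives `P * B = 0`, and letting `s → ∞` gives `P * P = P`.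
-/

open Filter NormedSpace Topology
open scoped Nat

namespace Matrix

variable {n : Type*} [Fintype n] [DecidableEq n]

theorem isClosed_rowStochastic {R : Type*} [Semiring R] [PartialOrder R] [IsOrderedRing R]
    [TopologicalSpace R] [OrderClosedTopology R] [IsTopologicalSemiring R] :
    IsClosed (rowStochastic R n : Set (Matrix n n R)) := by
  have hnonneg : IsClosed {M : Matrix n n R | ∀ i j, 0 ≤ M i j} := by
    simp only [Set.ofPred_forall]
    exact isClosed_iInter fun i => isClosed_iInter fun j =>
      isClosed_le continuous_const ((continuous_apply j).comp (continuous_apply i))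
  exact hnonneg.inter
    (isClosed_eq (continuous_id.matrix_mulVec continuous_const) continuous_const)

section Exp

open scoped Norms.Operator

theorem exp_apply_nonneg {A : Matrix n n ℝ} (hA : ∀ i j, 0 ≤ A i j) (i j : n) :
    0 ≤ exp A i j := by
  have hs := Pi.hasSum.1 (Pi.hasSum.1 (exp_series_hasSum_exp' (𝕂 := ℝ) A) i) j
  exact hs.nonneg fun k => mul_nonneg (by positivity) (pow_apply_nonneg hA k i j)

theorem exp_smul_one (c : ℝ) : exp (c • (1 : Matrix n n ℝ)) = Real.exp c • 1 := by
  have h := algebraMap_exp_comm (𝔸 := Matrix n n ℝ) c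
  rw [Algebra.algebraMap_eq_smul_one, Algebra.algebraMap_eq_smul_one, ← Real.exp_eq_exp_ℝ] at h
  exact h.symm

theorem exp_apply_nonneg_of_offDiag_nonneg {A : Matrix n n ℝ}
    (hA : ∀ i j, i ≠ j → 0 ≤ A i j) (i j : n) : 0 ≤ exp A i j := by
  set c : ℝ := ∑ k, |A k k|
  have hshift : ∀ i j, 0 ≤ (A + c • 1) i j := by
    intro i j
    rcases eq_or_ne i j with rfl | hij
    · have hdiag : |A i i| ≤ c :=
        Finset.single_le_sum (f := fun k => |A k k|) (fun k _ => abs_nonneg _)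
          (Finset.mem_univ i)
      simp only [add_apply, smul_apply, one_apply_eq, smul_eq_mul, mul_one]
      linarith [neg_le_abs (A i i)]
    · simpa [one_apply_ne hij] using hA i j hij
  have hexp : exp (A + c • 1) = Real.exp c • exp A := by
    rw [exp_add_of_commute _ _ ((Commute.one_right A).smul_right c), exp_smul_one,
      Matrix.mul_smul, mul_one]
  have := exp_apply_nonneg hshift i j
  rw [hexp, smul_apply, smul_eq_mul] at this
  exact nonneg_of_mul_nonneg_right this (Real.exp_pos c)

theorem exp_mulVec_of_mulVec_eq_zero {𝕂 : Type*} [RCLike 𝕂] {A : Matrix n n 𝕂} {v : n → 𝕂}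
    (hA : A *ᵥ v = 0) : exp A *ᵥ v = v := by
  have hs := (exp_series_hasSum_exp' (𝕂 := 𝕂) A).map (mulVec.addMonoidHomLeft v)
    (continuous_id.matrix_mulVec continuous_const)
  have hterm : (mulVec.addMonoidHomLeft v ∘ fun k : ℕ => (k !⁻¹ : 𝕂) • A ^ k) =
      fun k => if k = 0 then v else 0 := by
    funext k
    rcases k with _ | k
    · simp [mulVec.addMonoidHomLeft]
    · simp [mulVec.addMonoidHomLeft, smul_mulVec, pow_succ, ← mulVec_mulVec, hA]
  rw [hterm] at hs
  exact hs.unique (hasSum_ite_eq 0 v)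

theorem exp_mem_rowStochastic {A : Matrix n n ℝ} (hoff : ∀ i j, i ≠ j → 0 ≤ A i j)
    (hrow : ∀ i, ∑ j, A i j = 0) : exp A ∈ rowStochastic ℝ n :=
  ⟨exp_apply_nonneg_of_offDiag_nonneg hoff,
    exp_mulVec_of_mulVec_eq_zero (funext fun i => by simp [mulVec, dotProduct, hrow])⟩

end Exp

end Matrix

section FinalLimit

variable {𝔸 : Type*} [NormedRing 𝔸] [NormedAlgebra ℝ 𝔸] [CompleteSpace 𝔸] {B P : 𝔸}

theorem mul_exp_smul_eq_of_tendsto (hP : Tendsto (fun t : ℝ => exp (t • B)) atTop (𝓝 P))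
    (s : ℝ) : P * exp (s • B) = P := by
  have hshift : Tendsto (fun t : ℝ => exp ((t + s) • B)) atTop (𝓝 P) :=
    hP.comp (tendsto_atTop_add_const_right _ s tendsto_id)
  refine tendsto_nhds_unique ?_ hshift
  let : NormedAlgebra ℚ 𝔸 := NormedAlgebra.restrictScalars ℚ ℝ 𝔸
  refine (hP.mul_const (exp (s • B))).congr fun t => ?_
  rw [add_smul, exp_add_of_commute (((Commute.refl B).smul_left t).smul_right s)]

theorem mul_eq_zero_of_tendsto_exp_smul
    (hP : Tendsto (fun t : ℝ => exp (t • B)) atTop (𝓝 P)) : P * B = 0 := by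
  have hderiv : HasDerivAt (fun s : ℝ => P * exp (s • B)) (P * (exp ((0 : ℝ) • B) * B)) 0 :=
    (hasDerivAt_exp_smul_const B 0).const_mul P
  rw [funext (mul_exp_smul_eq_of_tendsto hP), zero_smul, exp_zero, one_mul] at hderiv
  exact hderiv.unique (hasDerivAt_const 0 P)

theorem isIdempotentElem_of_tendsto_exp_smul
    (hP : Tendsto (fun t : ℝ => exp (t • B)) atTop (𝓝 P)) : IsIdempotentElem P := by
  have hconst : Tendsto (fun t : ℝ => P * exp (t • B)) atTop (𝓝 P) := by
    simpa only [mul_exp_smul_eq_of_tendsto hP] using tendsto_const_nhds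
  exact tendsto_nhds_unique (hP.const_mul P) hconst

end FinalLimit

/-- If `P` is the final limit of `exp (t • B)` for a right intensity matrix
`B`, then `P` is right stochastic, `P * B = 0`, and `P * P = P`. -/
theorem final_limit_properties {Z : Type*} [Fintype Z] [DecidableEq Z]
    (B : Matrix Z Z ℝ)
    (hoff : ∀ i j, i ≠ j → 0 ≤ B i j)
    (hrow : ∀ i, ∑ j, B i j = 0)
    (P : Matrix Z Z ℝ)
    (hP : Tendsto (fun t : ℝ => NormedSpace.exp (t • B)) atTop (nhds P)) :
    ((∀ i j, 0 ≤ P i j) ∧ (∀ i, ∑ j, P i j = 1)) ∧ P * B = 0 ∧ P * P = P := by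
  have hstoch : P ∈ Matrix.rowStochastic ℝ Z := by
    refine Matrix.isClosed_rowStochastic.mem_of_tendsto hP ?_
    filter_upwards [eventually_ge_atTop 0] with t ht
    exact Matrix.exp_mem_rowStochastic (fun i j hij => mul_nonneg ht (hoff i j hij))
      (fun i => by simp [← Finset.mul_sum, hrow i])
  open scoped Matrix.Norms.Operator in
  exact ⟨Matrix.mem_rowStochastic_iff_sum.1 hstoch, mul_eq_zero_of_tendsto_exp_smul hP,
    (isIdempotentElem_of_tendsto_exp_smul hP).eq⟩
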